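/- Let X be a nonnegative integer-valued random variable equal to the number of closed trails of length at most 2i in G ∈ G_{n₁,n₂,p}, where n₂ = Θ(n₁) and (n₁n₂)^{−i/(2i+1)} ≪ p ≪ (n₁n₂)^{−(i−1)/(2i−1)} for a fixed integer i ≥ 2. Then for every fixed δ > 0, P(X ≥ δ·p·n₁·n₂) → 0 as n₁ → ∞. -/

import Mathlib

/-!
Markov's inequality. A closed trail of length `2j` is determined by `j` vertices on each side
and needs `2j` distinct present edges, so `E X ≤ ∑_{j=2}^{i} (n₁n₂)^j p^{2j}`. After division
by `p n₁ n₂` the `j`-th term is `(p (n₁n₂)^{(j-1)/(2j-1)})^{2j-1} ≤ a^{2j-1}`, where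
`a = p (n₁n₂)^{(i-1)/(2i-1)} → 0`.
-/

open MeasureTheory Filter

/-- The Bernoulli measure on `Bool` with success probability `p`. -/
noncomputable def bern (p : ℝ) : Measure Bool :=
  (ENNReal.ofReal (1 - p)) • Measure.dirac false + (ENNReal.ofReal p) • Measure.dirac true

/-- The random bipartite graph `G_{n₁,n₂,p}`. -/
noncomputable def bipMeasure (n₁ n₂ : ℕ) (p : ℝ) :
    Measure (Fin n₁ × Fin n₂ → Bool) :=
  Measure.pi fun _ => bern p

/-- Cyclic successor on `Fin j`. -/
def cyc {j : ℕ} (t : Fin j) : Fin j :=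
  ⟨((t : ℕ) + 1) % j, Nat.mod_lt _ (Nat.lt_of_le_of_lt (Nat.zero_le _) t.isLt)⟩

/-- The number of (cyclically indexed representations of) closed trails of
length `2j` in a sample of the random bipartite graph. -/
noncomputable def trailCount {n₁ n₂ : ℕ} (j : ℕ) (ω : Fin n₁ × Fin n₂ → Bool) : ℕ :=
  Nat.card {xy : (Fin j → Fin n₁) × (Fin j → Fin n₂) //
    Function.Injective (Sum.elim (fun t => (xy.1 t, xy.2 t))
      (fun t => (xy.1 (cyc t), xy.2 t)) : Fin j ⊕ Fin j → Fin n₁ × Fin n₂) ∧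
    ∀ t : Fin j, ω (xy.1 t, xy.2 t) = true ∧ ω (xy.1 (cyc t), xy.2 t) = true}

/-- The number `X` of closed trails of (even) length at most `2i`. -/
noncomputable def closedTrailsUpTo {n₁ n₂ : ℕ} (i : ℕ)
    (ω : Fin n₁ × Fin n₂ → Bool) : ℕ :=
  ∑ j ∈ Finset.Icc 2 i, trailCount j ω

open Finset
open scoped ENNReal

section Bernoulli

variable {p : ℝ}

lemma bern_singleton_true : bern p {true} = ENNReal.ofReal p := by
  simp [bern]

lemma isProbabilityMeasure_bern (h0 : 0 ≤ p) (h1 : p ≤ 1) : IsProbabilityMeasure (bern p) := by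
  constructor
  simp only [bern, Measure.coe_add, Measure.coe_smul, Pi.add_apply, Pi.smul_apply,
    measure_univ, smul_eq_mul, mul_one]
  rw [← ENNReal.ofReal_add (by linarith) h0]
  norm_num

lemma pi_bern_setOf_forall_mem {ι : Type*} [Fintype ι] (h0 : 0 ≤ p) (h1 : p ≤ 1)
    (S : Finset ι) :
    Measure.pi (fun _ : ι => bern p) {ω | ∀ e ∈ S, ω e = true} = ENNReal.ofReal p ^ #S := by
  classical
  have := isProbabilityMeasure_bern h0 h1
  have hpi : {ω : ι → Bool | ∀ e ∈ S, ω e = true}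
      = Set.univ.pi fun e => if e ∈ S then {true} else Set.univ := by
    ext ω
    simp only [Set.mem_ofPred_eq, Set.mem_pi, Set.mem_univ, forall_true_left]
    refine forall_congr' fun e => ?_
    split_ifs <;> simp [*]
  rw [hpi, Measure.pi_pi]
  simp_rw [apply_ite (bern p), bern_singleton_true, measure_univ]
  rw [prod_ite_mem, univ_inter, prod_const]

lemma pi_bern_setOf_injective_and_forall_le {ι α : Type*} [Fintype ι] [Fintype α]
    (h0 : 0 ≤ p) (h1 : p ≤ 1) (f : α → ι) :
    Measure.pi (fun _ : ι => bern p) {ω | Function.Injective f ∧ ∀ a, ω (f a) = true}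
      ≤ ENNReal.ofReal p ^ Fintype.card α := by
  classical
  by_cases hf : Function.Injective f
  · have hset : {ω : ι → Bool | Function.Injective f ∧ ∀ a, ω (f a) = true}
        = {ω | ∀ e ∈ univ.image f, ω e = true} := by
      simp [hf]
    rw [hset, pi_bern_setOf_forall_mem h0 h1, card_image_of_injective _ hf, card_univ]
  · simp [hf]

end Bernoulli

lemma lintegral_natCard_subtype {Ω α : Type*} [MeasurableSpace Ω] [DiscreteMeasurableSpace Ω]
    [Fintype α] (μ : Measure Ω) (P : α → Ω → Prop) :
    ∫⁻ ω, (Nat.card {x // P x ω} : ℝ≥0∞) ∂μ = ∑ x, μ {ω | P x ω} := by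
  classical
  have hcard : ∀ ω, (Nat.card {x // P x ω} : ℝ≥0∞) = ∑ x, {ω | P x ω}.indicator 1 ω := by
    intro ω
    rw [Nat.card_eq_fintype_card, Fintype.card_subtype, card_filter]
    simp [Set.indicator_apply]
  simp_rw [hcard]
  rw [lintegral_finsetSum _ fun _ _ => Measurable.of_discrete]
  simp_rw [lintegral_indicator_one MeasurableSet.of_discrete]

section Trails

variable {n₁ n₂ j : ℕ}

def trailEdges (xy : (Fin j → Fin n₁) × (Fin j → Fin n₂)) : Fin j ⊕ Fin j → Fin n₁ × Fin n₂ :=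
  Sum.elim (fun t => (xy.1 t, xy.2 t)) (fun t => (xy.1 (cyc t), xy.2 t))

lemma trailCount_eq (ω : Fin n₁ × Fin n₂ → Bool) :
    trailCount j ω = Nat.card {xy : (Fin j → Fin n₁) × (Fin j → Fin n₂) //
      Function.Injective (trailEdges xy) ∧ ∀ s, ω (trailEdges xy s) = true} := by
  simp only [trailCount, trailEdges, Sum.forall, Sum.elim_inl, Sum.elim_inr, forall_and]

lemma lintegral_trailCount_le {p : ℝ} (h0 : 0 ≤ p) (h1 : p ≤ 1) :
    ∫⁻ ω, (trailCount j ω : ℝ≥0∞) ∂bipMeasure n₁ n₂ p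
      ≤ ENNReal.ofReal (((n₁ : ℝ) * n₂) ^ j * p ^ (2 * j)) := by
  simp_rw [trailCount_eq]
  rw [lintegral_natCard_subtype]
  calc ∑ xy, bipMeasure n₁ n₂ p {ω | Function.Injective (trailEdges xy) ∧
          ∀ s, ω (trailEdges xy s) = true}
      ≤ ∑ _xy : (Fin j → Fin n₁) × (Fin j → Fin n₂), ENNReal.ofReal p ^ (2 * j) := by
        gcongr with xy
        rw [bipMeasure]
        simpa [two_mul] using pi_bern_setOf_injective_and_forall_le h0 h1 (trailEdges xy)
    _ = ENNReal.ofReal (((n₁ : ℝ) * n₂) ^ j * p ^ (2 * j)) := by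
        rw [ENNReal.ofReal_mul (by positivity), ENNReal.ofReal_pow h0, ENNReal.ofReal_pow
          (by positivity), ENNReal.ofReal_mul (by positivity)]
        simp [mul_pow]

end Trails

lemma lintegral_closedTrailsUpTo_le {n₁ n₂ i : ℕ} {p : ℝ} (h0 : 0 ≤ p) (h1 : p ≤ 1) :
    ∫⁻ ω, (closedTrailsUpTo i ω : ℝ≥0∞) ∂bipMeasure n₁ n₂ p
      ≤ ENNReal.ofReal (∑ j ∈ Icc 2 i, ((n₁ : ℝ) * n₂) ^ j * p ^ (2 * j)) := by
  simp_rw [closedTrailsUpTo, Nat.cast_sum]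
  rw [lintegral_finsetSum _ fun _ _ => Measurable.of_discrete,
    ENNReal.ofReal_sum_of_nonneg fun _ _ => by positivity]
  exact sum_le_sum fun j _ => lintegral_trailCount_le h0 h1

lemma bipMeasure_setOf_le_closedTrailsUpTo_le {n₁ n₂ i : ℕ} {p c : ℝ} (h0 : 0 ≤ p) (h1 : p ≤ 1)
    (hc : 0 < c) :
    bipMeasure n₁ n₂ p {ω | c ≤ (closedTrailsUpTo i ω : ℝ)}
      ≤ ENNReal.ofReal ((∑ j ∈ Icc 2 i, ((n₁ : ℝ) * n₂) ^ j * p ^ (2 * j)) / c) := by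
  have hset : {ω : Fin n₁ × Fin n₂ → Bool | c ≤ (closedTrailsUpTo i ω : ℝ)}
      = {ω | ENNReal.ofReal c ≤ (closedTrailsUpTo i ω : ℝ≥0∞)} := by
    ext ω
    rw [Set.mem_ofPred_eq, Set.mem_ofPred_eq, ← ENNReal.ofReal_natCast,
      ENNReal.ofReal_le_ofReal_iff (Nat.cast_nonneg _)]
  rw [hset, ENNReal.ofReal_div_of_pos hc]
  calc _ ≤ (∫⁻ ω, (closedTrailsUpTo i ω : ℝ≥0∞) ∂bipMeasure n₁ n₂ p) / ENNReal.ofReal c :=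
        meas_ge_le_lintegral_div Measurable.of_discrete.aemeasurable
          (ENNReal.ofReal_pos.mpr hc).ne' ENNReal.ofReal_ne_top
    _ ≤ _ := by gcongr; exact lintegral_closedTrailsUpTo_le h0 h1

lemma pos_and_one_le_of_one_le_mul_rpow {p e : ℝ} {n : ℕ} (he : 0 < e)
    (h : 1 ≤ p * (n : ℝ) ^ e) : 0 < p ∧ 1 ≤ (n : ℝ) := by
  have hn : n ≠ 0 := by
    rintro rfl
    simp [Real.zero_rpow he.ne'] at h
    linarith
  exact ⟨pos_of_mul_pos_left (by linarith) (by positivity), Nat.one_le_cast.mpr (by omega)⟩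

lemma pow_mul_pow_two_mul_le {N p : ℝ} {i j : ℕ} (hN : 1 ≤ N) (hp : 0 ≤ p) (hj : 1 ≤ j)
    (hji : j ≤ i) :
    N ^ j * p ^ (2 * j) ≤ (p * N ^ (((i : ℝ) - 1) / (2 * i - 1))) ^ (2 * j - 1) * (p * N) := by
  obtain ⟨m, rfl⟩ : ∃ m, j = m + 1 := ⟨j - 1, by omega⟩
  have hroot : (N ^ ((m : ℝ) / (2 * m + 1))) ^ (2 * m + 1) = N ^ m := by
    rw [← Real.rpow_natCast, ← Real.rpow_mul (by linarith)]
    push_cast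
    rw [div_mul_cancel₀ _ (by positivity), Real.rpow_natCast]
  have hexp : (m : ℝ) / (2 * m + 1) ≤ ((i : ℝ) - 1) / (2 * i - 1) := by
    have hmi : (m : ℝ) + 1 ≤ i := by exact_mod_cast hji
    rw [div_le_div_iff₀ (by positivity) (by linarith)]
    nlinarith
  calc N ^ (m + 1) * p ^ (2 * (m + 1))
      = (p * N ^ ((m : ℝ) / (2 * m + 1))) ^ (2 * m + 1) * (p * N) := by
        rw [mul_pow, hroot]; ring
    _ ≤ (p * N ^ (((i : ℝ) - 1) / (2 * i - 1))) ^ (2 * m + 1) * (p * N) := by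
        gcongr
    _ = _ := by rw [show 2 * (m + 1) - 1 = 2 * m + 1 by omega]

lemma sum_pow_mul_pow_div_le {N p δ : ℝ} {i : ℕ} (hN : 1 ≤ N) (hp : 0 < p) (hδ : 0 < δ) :
    (∑ j ∈ Icc 2 i, N ^ j * p ^ (2 * j)) / (δ * (p * N))
      ≤ ∑ j ∈ Icc 2 i, (p * N ^ (((i : ℝ) - 1) / (2 * i - 1))) ^ (2 * j - 1) / δ := by
  have hpN : 0 < p * N := by positivity
  calc (∑ j ∈ Icc 2 i, N ^ j * p ^ (2 * j)) / (δ * (p * N))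
      ≤ (∑ j ∈ Icc 2 i, (p * N ^ (((i : ℝ) - 1) / (2 * i - 1))) ^ (2 * j - 1) * (p * N))
          / (δ * (p * N)) := by
        gcongr (∑ j ∈ Icc 2 i, ?_) / _ with j hj
        have hj' := mem_Icc.mp hj
        exact pow_mul_pow_two_mul_le hN hp.le (by omega) hj'.2
    _ = _ := by rw [← sum_mul, mul_div_mul_right _ _ hpN.ne', sum_div]

theorem short_closed_trails_rare_general (i : ℕ) (hi : 2 ≤ i)
    (n₁ n₂ : ℕ → ℕ) (p : ℕ → ℝ) (hp : ∀ k, 0 ≤ p k ∧ p k ≤ 1)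
    (hplarge : Tendsto
      (fun k => p k * ((n₁ k : ℝ) * n₂ k) ^ ((i : ℝ) / (2 * i + 1)))
      atTop atTop)
    (hpsmall : Tendsto
      (fun k => p k * ((n₁ k : ℝ) * n₂ k) ^ (((i : ℝ) - 1) / (2 * i - 1)))
      atTop (nhds 0))
    (δ : ℝ) (hδ : 0 < δ) :
    Tendsto
      (fun k => bipMeasure (n₁ k) (n₂ k) (p k)
        {ω | δ * (p k * n₁ k * n₂ k) ≤ (closedTrailsUpTo i ω : ℝ)})
      atTop (nhds 0) := by
  set a := fun k => p k * ((n₁ k : ℝ) * n₂ k) ^ (((i : ℝ) - 1) / (2 * i - 1))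
  have hlim : Tendsto (fun k => ENNReal.ofReal (∑ j ∈ Icc 2 i, a k ^ (2 * j - 1) / δ))
      atTop (nhds 0) := by
    rw [← ENNReal.ofReal_zero, ← sum_const_zero (s := Icc 2 i)]
    refine ENNReal.tendsto_ofReal (tendsto_finsetSum _ fun j hj => ?_)
    have hj : 2 * j - 1 ≠ 0 := by have := (mem_Icc.mp hj).1; omega
    simpa [hj] using (hpsmall.pow (2 * j - 1)).div_const δ
  have hbound : ∀ᶠ k in atTop, bipMeasure (n₁ k) (n₂ k) (p k)
      {ω | δ * (p k * n₁ k * n₂ k) ≤ (closedTrailsUpTo i ω : ℝ)}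
        ≤ ENNReal.ofReal (∑ j ∈ Icc 2 i, a k ^ (2 * j - 1) / δ) := by
    have hexp : 0 < (i : ℝ) / (2 * i + 1) := by
      have : (0 : ℝ) < i := by exact_mod_cast (by omega : 0 < i)
      positivity
    filter_upwards [hplarge.eventually_ge_atTop 1] with k hk
    rw [← Nat.cast_mul] at hk
    obtain ⟨hpk, hN⟩ := pos_and_one_le_of_one_le_mul_rpow hexp hk
    rw [Nat.cast_mul] at hN
    rw [mul_assoc (p k)]
    refine (bipMeasure_setOf_le_closedTrailsUpTo_le (hp k).1 (hp k).2 (by positivity)).trans ?_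
    gcongr
    exact sum_pow_mul_pow_div_le hN hpk hδ
  exact tendsto_of_tendsto_of_tendsto_of_le_of_le' tendsto_const_nhds hlim
    (.of_forall fun _ => zero_le) hbound

/-- Let `X` be the number of closed trails of length at most `2i` in
`G ∈ G_{n₁,n₂,p}`, where `n₂ = Θ(n₁)` and
`(n₁n₂)^{−i/(2i+1)} ≪ p ≪ (n₁n₂)^{−(i−1)/(2i−1)}` for a fixed `i ≥ 2`.  Then
for every fixed `δ > 0`, `P(X ≥ δ·p·n₁·n₂) → 0` as `n₁ → ∞`. -/
theorem short_closed_trails_rare (i : ℕ) (hi : 2 ≤ i)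
    (n₁ n₂ : ℕ → ℕ) (p : ℕ → ℝ) (hp : ∀ k, 0 ≤ p k ∧ p k ≤ 1)
    (hΘ : ∃ c : ℝ, 0 < c ∧ ∀ k, (n₁ k : ℝ) ≤ c * n₂ k ∧ (n₂ k : ℝ) ≤ c * n₁ k)
    (hn₁ : Tendsto n₁ atTop atTop)
    (hplarge : Tendsto
      (fun k => p k * ((n₁ k : ℝ) * n₂ k) ^ ((i : ℝ) / (2 * i + 1)))
      atTop atTop)
    (hpsmall : Tendsto
      (fun k => p k * ((n₁ k : ℝ) * n₂ k) ^ (((i : ℝ) - 1) / (2 * i - 1)))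
      atTop (nhds 0))
    (δ : ℝ) (hδ : 0 < δ) :
    Tendsto
      (fun k => bipMeasure (n₁ k) (n₂ k) (p k)
        {ω | δ * (p k * n₁ k * n₂ k) ≤ (closedTrailsUpTo i ω : ℝ)})
      atTop (nhds 0) :=
  short_closed_trails_rare_general i hi n₁ n₂ p hp hplarge hpsmall δ hδ
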